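/- Let 0 < h ≤ 2 and set y = arcsin(h/2), a = 2y/(3h) (equivalently a·h/2 = y/3), and C = √2·(3(1 − (4/h²)·sin²(y/3)))^{-1/2}; note that 3(1 − (4/h²)sin²(y/3)) > 0 since sin(y/3) < sin(y) = h/2. Define θ_k = C·sin(a·k·h) for k ∈ ℤ. Then for every k ∈ ℤ the discrete identity (θ_{k+1}³ − 2θ_k³ + θ_{k-1}³)/h² + θ_k³ = θ_k/2 holds; i.e., θ solves the stationary difference equation (θ^{σ+1})_{x̄x} + θ^{σ+1} = θ/σ with σ = 2 on the uniform mesh x_k = kh. -/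
import Mathlib


open Real

/-- The discrete profile `θ_k = C·sin(a·k·h)` with `y = arcsin(h/2)`, `a = 2y/(3h)`,
and `C = √2·(3(1 − (4/h²)·sin²(y/3)))^{-1/2}` solves the stationary difference
equation `(θ³)_{x̄x} + θ³ = θ/2` (the case `σ = 2` of `(θ^{σ+1})_{x̄x} + θ^{σ+1} = θ/σ`)
on the uniform mesh `x_k = kh`, `0 < h ≤ 2`. -/
theorem blow_up_profile_solves_stationary_difference_equation
    (h : ℝ) (hh0 : 0 < h) (hh2 : h ≤ 2)
    (y a C : ℝ) (hy : y = Real.arcsin (h / 2)) (ha : a = 2 * y / (3 * h))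
    (hC : C = Real.sqrt 2 * (3 * (1 - (4 / h ^ 2) * Real.sin (y / 3) ^ 2)) ^ (-(1 / 2) : ℝ))
    (θ : ℤ → ℝ) (hθ : ∀ k : ℤ, θ k = C * Real.sin (a * k * h)) :
    ∀ k : ℤ, (θ (k + 1) ^ 3 - 2 * θ k ^ 3 + θ (k - 1) ^ 3) / h ^ 2 + θ k ^ 3
      = θ k / 2 := by
  have hhne : h ≠ 0 := ne_of_gt hh0
  set D : ℝ := 1 - (4 / h ^ 2) * Real.sin (y / 3) ^ 2 with hD_def
  -- basic facts about y
  have hy2 : Real.sin y = h / 2 := by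
    rw [hy]; exact Real.sin_arcsin (by linarith) (by linarith)
  have hy0 : 0 < y := by
    rw [hy]; exact Real.arcsin_pos.2 (by linarith)
  have hyp : y ≤ π / 2 := hy ▸ Real.arcsin_le_pi_div_two _
  have hpi : (0:ℝ) < π := Real.pi_pos
  -- sin(y/3) bounds
  have hsin3_pos : 0 < Real.sin (y / 3) :=
    Real.sin_pos_of_pos_of_lt_pi (by linarith) (by linarith)
  have hsin3_lt : Real.sin (y / 3) < h / 2 := by
    rw [← hy2]
    exact Real.strictMonoOn_sin ⟨by linarith, by linarith⟩
      ⟨by linarith, by linarith⟩ (by linarith)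
  have hDpos : 0 < D := by
    have hsq : Real.sin (y / 3) ^ 2 < (h / 2) ^ 2 := by nlinarith
    have : (4 / h ^ 2) * Real.sin (y / 3) ^ 2 < 1 := by
      rw [div_mul_eq_mul_div, div_lt_one (by positivity)]
      nlinarith
    simp only [hD_def]; linarith
  have h3D : (0:ℝ) < 3 * D := by linarith
  -- the key algebraic relation for C
  have hC2 : 3 * D * C ^ 2 = 2 := by
    have h1 : ((3 * D) ^ (-(1 / 2) : ℝ)) ^ 2 = (3 * D)⁻¹ := by
      rw [← Real.rpow_natCast ((3 * D) ^ (-(1 / 2) : ℝ)) 2,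
        ← Real.rpow_mul h3D.le]
      norm_num [Real.rpow_neg_one, mul_inv]
    rw [hC, mul_pow, Real.sq_sqrt (by norm_num : (0:ℝ) ≤ 2), h1]
    field_simp
  -- trig identities
  have cube : ∀ x : ℝ, Real.sin x ^ 3 = (3 * Real.sin x - Real.sin (3 * x)) / 4 := by
    intro x; have := Real.sin_three_mul x; linarith
  have hcosφ : Real.cos (2 * (y / 3)) = 1 - 2 * Real.sin (y / 3) ^ 2 := by
    have := Real.sin_sq_eq_half_sub (y / 3); linarith
  have hcos3φ : Real.cos (2 * y) = 1 - h ^ 2 / 2 := by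
    have := Real.sin_sq_eq_half_sub y
    rw [hy2] at this; nlinarith
  intro k
  set φ : ℝ := 2 * y / 3 with hφ_def
  have hah : a * h = φ := by simp only [hφ_def]; rw [ha]; field_simp
  set s : ℝ := a * (k : ℝ) * h with hs_def
  have e1 : a * ((k : ℝ) + 1) * h = s + φ := by rw [← hah]; ring
  have e2 : a * ((k : ℝ) - 1) * h = s - φ := by rw [← hah]; ring
  have key : (Real.sin (s + φ) ^ 3 - 2 * Real.sin s ^ 3 + Real.sin (s - φ) ^ 3) / h ^ 2
      + Real.sin s ^ 3 = 3 / 4 * D * Real.sin s := by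
    rw [cube (s + φ), cube (s - φ), cube s,
      show 3 * (s + φ) = 3 * s + 3 * φ by ring,
      show 3 * (s - φ) = 3 * s - 3 * φ by ring,
      Real.sin_add, Real.sin_sub, Real.sin_add, Real.sin_sub,
      show Real.cos φ = 1 - 2 * Real.sin (y / 3) ^ 2 by
        rw [show φ = 2 * (y / 3) by rw [hφ_def]; ring]; exact hcosφ,
      show Real.cos (3 * φ) = 1 - h ^ 2 / 2 by
        rw [show 3 * φ = 2 * y by rw [hφ_def]; ring]; exact hcos3φ]
    simp only [hD_def]
    field_simp
    ring
  have t1 : θ (k + 1) = C * Real.sin (s + φ) := by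
    rw [hθ (k + 1), ← e1]; push_cast; ring_nf
  have t2 : θ (k - 1) = C * Real.sin (s - φ) := by
    rw [hθ (k - 1), ← e2]; push_cast; ring_nf
  have t0 : θ k = C * Real.sin s := by rw [hθ k]
  rw [t1, t2, t0]
  have expand : ((C * Real.sin (s + φ)) ^ 3 - 2 * (C * Real.sin s) ^ 3
      + (C * Real.sin (s - φ)) ^ 3) / h ^ 2 + (C * Real.sin s) ^ 3
      = C ^ 3 * ((Real.sin (s + φ) ^ 3 - 2 * Real.sin s ^ 3 + Real.sin (s - φ) ^ 3) / h ^ 2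
        + Real.sin s ^ 3) := by
    field_simp
  rw [expand, key]
  linear_combination (C * Real.sin s / 4) * hC2
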